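/- If s_0, s_1 ∈ ℝ are not eigenvalues of Λ, then for every T ∈ 𝒯_Λ one has F_{s_0}(F_{s_1}(T)) = F_{s_1}(F_{s_0}(T)). Moreover, if s_1 is not an eigenvalue of Λ and T ∈ D^i_Λ, then F_{s_1}(T) ∈ D^i_Λ and F_{λ_i}(F_{s_1}(T)) = F_{s_1}(F_{λ_i}(T)). -/

import Mathlib

open Matrix Filter Topology

attribute [local instance] Matrix.normedAddCommGroup Matrix.normedSpace

noncomputable section

attribute [local instance] Classical.propDecidable

/-- The first `n+1` columns of the `(n+2)×(n+2)` matrix `M` are linearly independent,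
i.e. `M` is *almost invertible*. -/
def AlmostInv {n : ℕ} (M : Matrix (Fin (n+2)) (Fin (n+2)) ℝ) : Prop :=
  LinearIndependent ℝ (fun j : Fin (n+1) => fun i => M i j.castSucc)

/-- `M = Q⋆ R⋆` with `Q⋆` orthogonal of determinant one and `R⋆` upper triangular
with positive diagonal except possibly at the last entry. -/
def IsQsRs {n : ℕ} (M Q R : Matrix (Fin (n+2)) (Fin (n+2)) ℝ) : Prop :=
  Qᵀ * Q = 1 ∧ Q.det = 1 ∧ (∀ i j : Fin (n+2), j < i → R i j = 0) ∧
    (∀ i : Fin (n+1), 0 < R i.castSucc i.castSucc) ∧ M = Q * R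

/-- `M = Q R` with `Q` orthogonal and `R` upper triangular with positive diagonal. -/
def IsQR {n : ℕ} (M Q R : Matrix (Fin (n+2)) (Fin (n+2)) ℝ) : Prop :=
  Qᵀ * Q = 1 ∧ (∀ i j : Fin (n+2), j < i → R i j = 0) ∧
    (∀ i : Fin (n+2), 0 < R i i) ∧ M = Q * R

/-- `E_n = diag(1, …, 1, -1)`. -/
def En (n : ℕ) : Matrix (Fin (n+2)) (Fin (n+2)) ℝ :=
  Matrix.diagonal (fun i => if i = Fin.last (n+1) then -1 else 1)

/-- The signed shifted QR step `F_s(T) = Q⋆ᵀ T Q⋆` where `T - s I = Q⋆ R⋆`. -/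
def Fs {n : ℕ} (s : ℝ) (T : Matrix (Fin (n+2)) (Fin (n+2)) ℝ) :
    Matrix (Fin (n+2)) (Fin (n+2)) ℝ :=
  if h : ∃ Q R, IsQsRs (T - s • 1) Q R then (h.choose)ᵀ * T * h.choose else 0

/-- The (plain) shifted QR step `Φ(T, s) = Qᵀ T Q` where `T - s I = Q R`. -/
def Phi {n : ℕ} (T : Matrix (Fin (n+2)) (Fin (n+2)) ℝ) (s : ℝ) :
    Matrix (Fin (n+2)) (Fin (n+2)) ℝ :=
  if h : ∃ Q R, IsQR (T - s • 1) Q R then (h.choose)ᵀ * T * h.choose else 0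

/-- `T` is symmetric and tridiagonal. -/
def SymTridiag {n : ℕ} (T : Matrix (Fin (n+2)) (Fin (n+2)) ℝ) : Prop :=
  Tᵀ = T ∧ ∀ i j : Fin (n+2), (i.val + 1 < j.val ∨ j.val + 1 < i.val) → T i j = 0

/-- `b(T)`, the lowest subdiagonal entry `T_{n, n-1}` (1-based). -/
def lowb {n : ℕ} (T : Matrix (Fin (n+2)) (Fin (n+2)) ℝ) : ℝ :=
  T (Fin.last (n+1)) ⟨n, by omega⟩

/-- `T` is unreduced: all subdiagonal entries are nonzero. -/
def Unreduced {n : ℕ} (T : Matrix (Fin (n+2)) (Fin (n+2)) ℝ) : Prop :=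
  ∀ i : Fin (n+1), T i.succ i.castSucc ≠ 0

/-- `𝒯_Λ`: real symmetric tridiagonal matrices with the same characteristic polynomial
as `Λ = diagonal lam`. -/
def TSet {n : ℕ} (lam : Fin (n+2) → ℝ) : Set (Matrix (Fin (n+2)) (Fin (n+2)) ℝ) :=
  {T | SymTridiag T ∧ T.charpoly = (Matrix.diagonal lam).charpoly}

/-- The deflation neighborhood `D^i_{Λ,ε}`. -/
def Dset {n : ℕ} (lam : Fin (n+2) → ℝ) (ε : ℝ) (i : Fin (n+2)) :
    Set (Matrix (Fin (n+2)) (Fin (n+2)) ℝ) :=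
  {T ∈ TSet lam | |lowb T| ≤ ε ∧
    |T (Fin.last (n+1)) (Fin.last (n+1)) - lam i| ≤ Real.sqrt 2 * ε}

/-- The deflation set `D^i_{Λ,0}`. -/
def D0 {n : ℕ} (lam : Fin (n+2) → ℝ) (i : Fin (n+2)) :
    Set (Matrix (Fin (n+2)) (Fin (n+2)) ℝ) :=
  {T ∈ TSet lam | lowb T = 0 ∧ T (Fin.last (n+1)) (Fin.last (n+1)) = lam i}

/-- The deflation domain `D^i_Λ`: matrices `T ∈ 𝒯_Λ` with `T - λ_i I` almost invertible. -/
def DD {n : ℕ} (lam : Fin (n+2) → ℝ) (i : Fin (n+2)) :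
    Set (Matrix (Fin (n+2)) (Fin (n+2)) ℝ) :=
  {T ∈ TSet lam | AlmostInv (T - lam i • 1)}

/-- A simple shift strategy. -/
def SimpleShift {n : ℕ} (lam : Fin (n+2) → ℝ)
    (σ : Matrix (Fin (n+2)) (Fin (n+2)) ℝ → ℝ) : Prop :=
  (∀ T ∈ TSet lam, σ (En n * T * En n) = σ T) ∧
  ∃ C > 0, ∀ T ∈ TSet lam, ∃ i : Fin (n+2), |σ T - lam i| ≤ C * |lowb T|

/-- The vector space of real symmetric tridiagonal matrices. -/
def STSpace (n : ℕ) : Submodule ℝ (Matrix (Fin (n+2)) (Fin (n+2)) ℝ) where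
  carrier := {T | SymTridiag T}
  add_mem' := by
    rintro a b ⟨ha1, ha2⟩ ⟨hb1, hb2⟩
    refine ⟨by rw [Matrix.transpose_add, ha1, hb1], fun i j h => ?_⟩
    simp [Matrix.add_apply, ha2 i j h, hb2 i j h]
  zero_mem' := ⟨Matrix.transpose_zero, fun i j _ => rfl⟩
  smul_mem' := by
    rintro c a ⟨ha1, ha2⟩
    refine ⟨by rw [Matrix.transpose_smul, ha1], fun i j h => ?_⟩
    simp [Matrix.smul_apply, ha2 i j h]

/-- `σ` is smooth near `A ⊆ 𝒯_Λ`: there are an open subset `U` of the vector space of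
symmetric tridiagonal matrices containing `A` and a `C^∞` function on `U` agreeing with
`σ` on `U ∩ 𝒯_Λ`. -/
def SmoothNear {n : ℕ} (lam : Fin (n+2) → ℝ)
    (σ : Matrix (Fin (n+2)) (Fin (n+2)) ℝ → ℝ)
    (A : Set (Matrix (Fin (n+2)) (Fin (n+2)) ℝ)) : Prop :=
  ∃ (U : Set (STSpace n)) (σt : STSpace n → ℝ),
    IsOpen U ∧
    (∀ T : STSpace n, (T : Matrix (Fin (n+2)) (Fin (n+2)) ℝ) ∈ A → T ∈ U) ∧
    ContDiffOn ℝ (⊤ : ℕ∞) σt U ∧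
    ∀ T : STSpace n, T ∈ U → (T : Matrix (Fin (n+2)) (Fin (n+2)) ℝ) ∈ TSet lam →
      σt T = σ (T : Matrix (Fin (n+2)) (Fin (n+2)) ℝ)

/-- The Frobenius norm `‖A‖ = √(trace(Aᵀ A))`. -/
def frobNorm {n : ℕ} (A : Matrix (Fin (n+2)) (Fin (n+2)) ℝ) : ℝ :=
  Real.sqrt (Matrix.trace (Aᵀ * A))

end

/-!
`F_s(T)` is the conjugation of `T` by the orthogonal factor `Q⋆` of `T - sI`, and this factor is
unique: if `Q⋆R⋆ = Q⋆'R⋆'`, then `U = Q⋆ᵀQ⋆'` satisfies `U R⋆' = R⋆` with the first `n-1` columns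
of `R⋆'` independent, so `U` is upper triangular, hence an orthogonal diagonal matrix; the positive
diagonal of `R⋆` and `det U = 1` force `U = I`.

Multiplying the factorizations of two consecutive steps shows that `F_a(F_b(T))` is the
conjugation of `T` by the `Q⋆`-factor of `(T - aI)(T - bI)`. Shifts of `T` commute, so both orders
conjugate by the same matrix. When `s` is not an eigenvalue, `R⋆` is invertible, and
`F_s(T) - aI = R⋆ (T - aI) R⋆⁻¹` keeps the first `n-1` columns independent, while
`Q⋆ = (T - sI) R⋆⁻¹` is upper Hessenberg, so `F_s(T) = R⋆Q⋆ + sI` is symmetric Hessenberg,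
i.e. tridiagonal, with the spectrum of `T`.
-/

open InnerProductSpace

section GramSchmidt

variable {𝕜 E ι : Type*} [RCLike 𝕜] [NormedAddCommGroup E] [InnerProductSpace 𝕜 E]
  [LinearOrder ι] [LocallyFiniteOrderBot ι] [WellFoundedLT ι]

theorem inner_gramSchmidt_self (f : ι → E) (j : ι) :
    inner 𝕜 (gramSchmidt 𝕜 f j) (f j) = (‖gramSchmidt 𝕜 f j‖ ^ 2 : 𝕜) := by
  conv_lhs => rw [gramSchmidt_def'' 𝕜 f j]
  rw [inner_add_right, inner_sum, inner_self_eq_norm_sq_to_K, add_eq_left]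
  exact Finset.sum_eq_zero fun i hi => by
    rw [inner_smul_right, gramSchmidt_orthogonal 𝕜 f (Finset.mem_Iio.1 hi).ne', mul_zero]

theorem inner_gramSchmidtNormed_self (f : ι → E) (j : ι) :
    inner 𝕜 (gramSchmidtNormed 𝕜 f j) (f j) = (‖gramSchmidt 𝕜 f j‖ : 𝕜) := by
  rw [gramSchmidtNormed, inner_smul_left, inner_gramSchmidt_self, map_inv₀, RCLike.conj_ofReal,
    sq, ← mul_assoc, inv_mul_mul_self]

end GramSchmidt

theorem Matrix.exists_orthogonal_mul_isUpperTriangular {ι : Type*} [Fintype ι] [LinearOrder ι]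
    [LocallyFiniteOrderBot ι] (M : Matrix ι ι ℝ) :
    ∃ Q R : Matrix ι ι ℝ, Qᵀ * Q = 1 ∧ R.IsUpperTriangular ∧ M = Q * R ∧
      ∀ j, LinearIndependent ℝ (fun k : Set.Iic j => M.col k) → 0 < R j j := by
  let f : ι → EuclideanSpace ℝ ι := fun j => WithLp.toLp 2 (M.col j)
  let b := gramSchmidtOrthonormalBasis (finrank_euclideanSpace (𝕜 := ℝ) (ι := ι)) f
  let e := EuclideanSpace.basisFun ι ℝ
  refine ⟨e.toBasis.toMatrix b, b.toBasis.toMatrix f, ?_,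
    gramSchmidtOrthonormalBasis_inv_isUpperTriangular _ f, ?_, fun j hj => ?_⟩
  · classical simpa using e.toMatrix_orthonormalBasis_conjTranspose_mul_self b
  · rw [← b.coe_toBasis, Module.Basis.toMatrix_mul_toMatrix]
    ext i j
    simp [e, f, Module.Basis.toMatrix_apply]
  · have hgs : gramSchmidt ℝ f j ≠ 0 := gramSchmidt_ne_zero_coe j
      (hj.map' (WithLp.linearEquiv 2 ℝ (ι → ℝ)).symm.toLinearMap (LinearEquiv.ker _))
    have hb : b j = gramSchmidtNormed ℝ f j :=
      gramSchmidtOrthonormalBasis_apply _ (by simpa [gramSchmidtNormed] using hgs)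
    rw [Module.Basis.toMatrix_apply, OrthonormalBasis.coe_toBasis_repr_apply,
      OrthonormalBasis.repr_apply_apply, hb, inner_gramSchmidtNormed_self]
    exact_mod_cast norm_pos_iff.2 hgs

section Triangular

variable {m K : Type*} [Fintype m] [CommRing K]

theorem Matrix.IsUpperTriangular.mul_apply_self [LinearOrder m] {A B : Matrix m m K}
    (hA : A.IsUpperTriangular) (hB : B.IsUpperTriangular) (i : m) :
    (A * B) i i = A i i * B i i := by
  refine Finset.sum_eq_single i (fun k _ hki => ?_) (by simp)
  rcases hki.lt_or_gt with h | h
  · exact mul_eq_zero_of_left (hA h) _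
  · exact mul_eq_zero_of_right _ (hB h)

theorem Matrix.IsUpperTriangular.isDiag_of_transpose_mul_self [DecidableEq m] [LinearOrder m]
    {U : Matrix m m K} (hU : U.IsUpperTriangular) (horth : Uᵀ * U = 1) : U.IsDiag := by
  have : Invertible U := invertibleOfLeftInverse U Uᵀ horth
  have hUt : Uᵀ.IsUpperTriangular :=
    inv_eq_left_inv horth ▸ blockTriangular_inv_of_blockTriangular hU
  intro i j hij
  rcases hij.lt_or_gt with h | h
  · exact hUt h
  · exact hU h

theorem Matrix.transpose_mul_mul_sub_smul_one [DecidableEq m] {Q : Matrix m m K}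
    (hQ : Qᵀ * Q = 1) (T : Matrix m m K) (a : K) :
    Qᵀ * T * Q - a • 1 = Qᵀ * (T - a • 1) * Q := by
  rw [Matrix.mul_sub, Matrix.sub_mul, Matrix.mul_smul, Matrix.mul_one, Matrix.smul_mul, hQ]

theorem Matrix.charpoly_transpose_mul_mul [DecidableEq m] {Q : Matrix m m K}
    (hQ : Qᵀ * Q = 1) (T : Matrix m m K) : (Qᵀ * T * Q).charpoly = T.charpoly := by
  rw [charpoly_mul_comm, ← Matrix.mul_assoc, mul_eq_one_comm.1 hQ, Matrix.one_mul]

theorem Matrix.sub_smul_one_mul_comm [DecidableEq m] (T : Matrix m m K) (a b : K) :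
    (T - a • 1) * (T - b • 1) = (T - b • 1) * (T - a • 1) := by
  simp only [Matrix.mul_sub, Matrix.sub_mul, Matrix.mul_smul, Matrix.smul_mul, Matrix.mul_one,
    Matrix.one_mul, smul_sub, smul_smul, mul_comm a b]
  abel

theorem Matrix.mulVec_mul {l o : Type*} [Fintype o] (A : Matrix l m K) (B : Matrix m o K) :
    (A * B).mulVec = A.mulVec ∘ B.mulVec :=
  funext fun v => (mulVec_mulVec v A B).symm

end Triangular

section Hessenberg

variable {m : ℕ} {α : Type*}

def Matrix.IsUpperHessenberg [Zero α] (M : Matrix (Fin m) (Fin m) α) : Prop :=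
  ∀ i j : Fin m, (j : ℕ) + 1 < i → M i j = 0

theorem Matrix.IsUpperTriangular.isUpperHessenberg [Zero α] {M : Matrix (Fin m) (Fin m) α}
    (hM : M.IsUpperTriangular) : M.IsUpperHessenberg :=
  fun i j h => hM (show j < i from Fin.lt_def.2 (by omega))

theorem Matrix.IsUpperHessenberg.add [AddZeroClass α] {M N : Matrix (Fin m) (Fin m) α}
    (hM : M.IsUpperHessenberg) (hN : N.IsUpperHessenberg) : (M + N).IsUpperHessenberg :=
  fun i j h => by rw [add_apply, hM i j h, hN i j h, add_zero]

theorem Matrix.IsUpperHessenberg.sub [SubNegZeroMonoid α] {M N : Matrix (Fin m) (Fin m) α}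
    (hM : M.IsUpperHessenberg) (hN : N.IsUpperHessenberg) : (M - N).IsUpperHessenberg :=
  fun i j h => by rw [sub_apply, hM i j h, hN i j h, sub_zero]

theorem Matrix.IsUpperHessenberg.mul_isUpperTriangular [NonUnitalNonAssocSemiring α]
    {H U : Matrix (Fin m) (Fin m) α} (hH : H.IsUpperHessenberg) (hU : U.IsUpperTriangular) :
    (H * U).IsUpperHessenberg := by
  intro i j h
  rw [mul_apply]
  refine Finset.sum_eq_zero fun k _ => ?_
  rcases lt_or_ge ((k : ℕ) + 1) i with hk | hk
  · exact mul_eq_zero_of_left (hH i k hk) _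
  · exact mul_eq_zero_of_right _ (hU (show j < k from Fin.lt_def.2 (by omega)))

theorem Matrix.IsUpperTriangular.mul_isUpperHessenberg [NonUnitalNonAssocSemiring α]
    {U H : Matrix (Fin m) (Fin m) α} (hU : U.IsUpperTriangular) (hH : H.IsUpperHessenberg) :
    (U * H).IsUpperHessenberg := by
  intro i j h
  rw [mul_apply]
  refine Finset.sum_eq_zero fun k _ => ?_
  rcases lt_or_ge k i with hk | hk
  · exact mul_eq_zero_of_left (hU hk) _
  · exact mul_eq_zero_of_right _ (hH k j (by rw [Fin.le_def] at hk; omega))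

end Hessenberg

section AlmostInv

variable {n : ℕ} {M A U : Matrix (Fin (n+2)) (Fin (n+2)) ℝ}

theorem almostInv_iff_injective_mulVec :
    AlmostInv M ↔ Function.Injective (M.submatrix id Fin.castSucc).mulVec :=
  mulVec_injective_iff.symm

theorem almostInv_of_isUnit_det (h : IsUnit M.det) : AlmostInv M :=
  (linearIndependent_cols_iff_isUnit.2 ((isUnit_iff_isUnit_det M).2 h)).comp _
    (Fin.castSucc_injective _)

theorem AlmostInv.mul_left (hM : AlmostInv M) (hA : IsUnit A.det) : AlmostInv (A * M) := by
  rw [almostInv_iff_injective_mulVec] at hM ⊢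
  change Function.Injective (A * M.submatrix id Fin.castSucc).mulVec
  rw [mulVec_mul]
  exact (mulVec_injective_iff_isUnit.2 ((isUnit_iff_isUnit_det A).2 hA)).comp hM

theorem AlmostInv.mul_right (hM : AlmostInv M) (hU : U.IsUpperTriangular)
    (hdiag : ∀ i : Fin (n+1), U i.castSucc i.castSucc ≠ 0) : AlmostInv (M * U) := by
  rw [almostInv_iff_injective_mulVec] at hM ⊢
  set S := U.submatrix Fin.castSucc Fin.castSucc
  have hS : S.IsUpperTriangular := fun i j (hij : j < i) =>
    hU (Fin.castSucc_lt_castSucc_iff.2 hij)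
  have hSdet : IsUnit S.det := by
    rw [det_of_isUpperTriangular hS]
    exact (Finset.prod_ne_zero_iff.2 fun i _ => hdiag i).isUnit
  have hMU : (M * U).submatrix id Fin.castSucc = M.submatrix id Fin.castSucc * S := by
    ext i j
    have hlast : U (Fin.last _) j.castSucc = 0 := hU (Fin.castSucc_lt_last j)
    rw [submatrix_apply, mul_apply, Fin.sum_univ_castSucc, hlast, mul_zero, add_zero]
    rfl
  rw [hMU, mulVec_mul]
  exact hM.comp (mulVec_injective_iff_isUnit.2 ((isUnit_iff_isUnit_det S).2 hSdet))

theorem AlmostInv.linearIndependent_col_Iic (hM : AlmostInv M) (j : Fin (n+1)) :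
    LinearIndependent ℝ (fun k : Set.Iic j.castSucc => M.col k) := by
  have hk (k : Set.Iic j.castSucc) : (k : ℕ) < n + 1 := by
    have := Fin.le_def.1 k.2
    simp only [Fin.val_castSucc] at this
    omega
  refine hM.comp (fun k => Fin.castLT k.1 (hk k)) fun k l hkl => ?_
  exact Subtype.ext (Fin.ext (by simpa [Fin.ext_iff] using hkl))

end AlmostInv

section QsRs

variable {n : ℕ}

theorem En_mul_En : En n * En n = 1 := by
  rw [En, diagonal_mul_diagonal, ← diagonal_one]
  congr 1
  ext i
  split_ifs <;> norm_num

theorem det_En : (En n).det = -1 := by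
  simp [En, det_diagonal]

theorem En_transpose : (En n)ᵀ = En n := diagonal_transpose _

theorem Matrix.IsUpperTriangular.updateCol_last {K : Type*} [Zero K]
    {R : Matrix (Fin (n+2)) (Fin (n+2)) K} (hR : R.IsUpperTriangular) (c : Fin (n+2) → K) :
    (R.updateCol (Fin.last _) c).IsUpperTriangular := fun i j (hij : j < i) => by
  rw [updateCol_ne (hij.trans_le (Fin.le_last i)).ne]
  exact hR hij

theorem Matrix.IsUpperTriangular.of_mul_eq {K : Type*} [Field K]
    {U R R' : Matrix (Fin (n+2)) (Fin (n+2)) K} (hR : R.IsUpperTriangular)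
    (hR' : R'.IsUpperTriangular) (hdiag : ∀ i : Fin (n+1), R' i.castSucc i.castSucc ≠ 0)
    (h : U * R' = R) : U.IsUpperTriangular := by
  -- replacing the last column of `R'` by `e_last` makes it invertible without
  -- changing the first `n+1` columns of `U * R'`
  set R'' := R'.updateCol (Fin.last _) (Pi.single (Fin.last _) 1)
  have hR'' : R''.IsUpperTriangular := hR'.updateCol_last _
  have hdet : IsUnit R''.det := by
    rw [det_of_isUpperTriangular hR'', Fin.prod_univ_castSucc]
    simpa [R'', (Fin.castSucc_lt_last _).ne] using Finset.prod_ne_zero_iff.2 fun i _ => hdiag i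
  have : Invertible R'' := invertibleOfIsUnitDet _ hdet
  have hU : U = U * R'' * R''⁻¹ := by simp [Matrix.mul_assoc]
  rw [hU, mul_updateCol, h]
  exact (hR.updateCol_last _).mul (blockTriangular_inv_of_blockTriangular hR'')

theorem exists_isQsRs {M : Matrix (Fin (n+2)) (Fin (n+2)) ℝ} (hM : AlmostInv M) :
    ∃ Q R, IsQsRs M Q R := by
  obtain ⟨Q, R, hQ, hR, hQR, hpos⟩ := M.exists_orthogonal_mul_isUpperTriangular
  have hpos' (j : Fin (n+1)) := hpos _ (hM.linearIndependent_col_Iic j)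
  have hdet : Q.det * Q.det = 1 := by simpa using congrArg det hQ
  rcases mul_self_eq_one_iff.1 hdet with hd | hd
  · exact ⟨Q, R, hQ, hd, hR, hpos', hQR⟩
  -- otherwise flip the sign of the last column of `Q` and of the last row of `R`
  refine ⟨Q * En n, En n * R, ?_, ?_, (blockTriangular_diagonal _).mul hR, fun j => ?_, ?_⟩
  · rw [transpose_mul, En_transpose, Matrix.mul_assoc, ← Matrix.mul_assoc Qᵀ, hQ,
      Matrix.one_mul, En_mul_En]
  · rw [det_mul, det_En, hd, neg_one_mul, neg_neg]
  · simpa [En, diagonal_mul, (Fin.castSucc_lt_last j).ne] using hpos' j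
  · rw [Matrix.mul_assoc, ← Matrix.mul_assoc (En n), En_mul_En, Matrix.one_mul, hQR]

theorem IsQsRs.unique {M Q R Q' R' : Matrix (Fin (n+2)) (Fin (n+2)) ℝ}
    (h : IsQsRs M Q R) (h' : IsQsRs M Q' R') : Q = Q' := by
  obtain ⟨hQ, hdQ, hR, hRpos, rfl⟩ := h
  obtain ⟨hQ', hdQ', hR', hRpos', hQR⟩ := h'
  set U := Qᵀ * Q'
  have hUorth : Uᵀ * U = 1 := by
    rw [transpose_mul, transpose_transpose, Matrix.mul_assoc, ← Matrix.mul_assoc Q,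
      mul_eq_one_comm.1 hQ, Matrix.one_mul, hQ']
  have hUR : U * R' = R := by
    rw [Matrix.mul_assoc, ← hQR, ← Matrix.mul_assoc, hQ, Matrix.one_mul]
  have hUdiag : U.IsDiag := (IsUpperTriangular.of_mul_eq hR hR' (fun i => (hRpos' i).ne')
    hUR).isDiag_of_transpose_mul_self hUorth
  set d := U.diag
  have hU : U = diagonal d := hUdiag.diagonal_diag.symm
  have hsq (i : Fin (n+2)) : d i * d i = 1 := by
    simpa [hU] using congrFun₂ hUorth i i
  have hd_castSucc (j : Fin (n+1)) : d j.castSucc = 1 := by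
    have hj : d j.castSucc * R' j.castSucc j.castSucc = R j.castSucc j.castSucc := by
      simpa [hU] using congrFun₂ hUR j.castSucc j.castSucc
    have : 0 < d j.castSucc := pos_of_mul_pos_left (hj ▸ hRpos j) (hRpos' j).le
    nlinarith [hsq j.castSucc]
  have hd_last : d (Fin.last _) = 1 := by
    have : U.det = 1 := by rw [det_mul, det_transpose, hdQ, hdQ', one_mul]
    simpa [hU, det_diagonal, Fin.prod_univ_castSucc, hd_castSucc] using this
  have hU1 : U = 1 := by
    rw [hU, ← diagonal_one]
    congr 1
    ext i
    induction i using Fin.lastCases with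
    | last => exact hd_last
    | cast j => exact hd_castSucc j
  calc Q = Q * U := by rw [hU1, Matrix.mul_one]
    _ = Q' := by rw [← Matrix.mul_assoc, mul_eq_one_comm.1 hQ, Matrix.one_mul]

theorem IsQsRs.mul {A B Q₁ R₁ Q₂ R₂ : Matrix (Fin (n+2)) (Fin (n+2)) ℝ}
    (h₁ : IsQsRs A Q₁ R₁) (h₂ : IsQsRs B Q₂ R₂) :
    IsQsRs (Q₁ * B * R₁) (Q₁ * Q₂) (R₂ * R₁) := by
  obtain ⟨hQ₁, hd₁, hR₁, hp₁, -⟩ := h₁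
  obtain ⟨hQ₂, hd₂, hR₂, hp₂, rfl⟩ := h₂
  refine ⟨?_, by rw [det_mul, hd₁, hd₂, one_mul], BlockTriangular.mul hR₂ hR₁, fun j => ?_,
    by simp only [Matrix.mul_assoc]⟩
  · rw [transpose_mul, Matrix.mul_assoc, ← Matrix.mul_assoc Q₁ᵀ, hQ₁, Matrix.one_mul, hQ₂]
  · rw [IsUpperTriangular.mul_apply_self hR₂ hR₁]
    exact mul_pos (hp₂ j) (hp₁ j)

variable {T Q R : Matrix (Fin (n+2)) (Fin (n+2)) ℝ} {s : ℝ}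

theorem IsQsRs.transpose_mul_mul_eq (h : IsQsRs (T - s • 1) Q R) :
    Qᵀ * T * Q = R * Q + s • 1 := by
  obtain ⟨hQ, -, -, -, hQR⟩ := h
  rw [← sub_add_cancel T (s • 1), hQR, Matrix.mul_add, Matrix.add_mul, ← Matrix.mul_assoc, hQ,
    Matrix.one_mul, Matrix.mul_smul, Matrix.mul_one, Matrix.smul_mul, hQ]

theorem IsQsRs.transpose_mul_mul_sub_mul (h : IsQsRs (T - s • 1) Q R) (a : ℝ) :
    (Qᵀ * T * Q - a • 1) * R = R * (T - a • 1) := by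
  obtain ⟨hQ, -, -, -, hQR⟩ := h
  calc (Qᵀ * T * Q - a • 1) * R = Qᵀ * ((T - a • 1) * (Q * R)) := by
        rw [transpose_mul_mul_sub_smul_one hQ]
        simp only [Matrix.mul_assoc]
    _ = Qᵀ * Q * R * (T - a • 1) := by
        rw [← hQR, sub_smul_one_mul_comm, hQR]
        simp only [Matrix.mul_assoc]
    _ = R * (T - a • 1) := by rw [hQ, Matrix.one_mul]

theorem IsQsRs.isUnit_det_right {M : Matrix (Fin (n+2)) (Fin (n+2)) ℝ} (h : IsQsRs M Q R)
    (hM : IsUnit M.det) : IsUnit R.det := by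
  obtain ⟨-, hdQ, -, -, rfl⟩ := h
  rwa [det_mul, hdQ, one_mul] at hM

end QsRs

section Step

variable {n : ℕ} {T Q R : Matrix (Fin (n+2)) (Fin (n+2)) ℝ} {s a b : ℝ}

theorem Fs_eq_of_isQsRs (h : IsQsRs (T - s • 1) Q R) : Fs s T = Qᵀ * T * Q := by
  have hex : ∃ Q R, IsQsRs (T - s • 1) Q R := ⟨Q, R, h⟩
  rw [Fs, dif_pos hex, hex.choose_spec.choose_spec.unique h]

theorem Fs_sub_smul_one (h : IsQsRs (T - s • 1) Q R) (a : ℝ) :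
    Fs s T - a • 1 = Qᵀ * (T - a • 1) * Q := by
  rw [Fs_eq_of_isQsRs h, transpose_mul_mul_sub_smul_one h.1]

theorem charpoly_Fs (hs : AlmostInv (T - s • 1)) : (Fs s T).charpoly = T.charpoly := by
  obtain ⟨Q, R, h⟩ := exists_isQsRs hs
  rw [Fs_eq_of_isQsRs h, charpoly_transpose_mul_mul h.1]

theorem isUnit_det_Fs_sub (hs : AlmostInv (T - s • 1)) (hb : IsUnit (T - b • 1).det) :
    IsUnit (Fs s T - b • 1).det := by
  obtain ⟨Q, R, h⟩ := exists_isQsRs hs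
  obtain ⟨-, hdQ, -, -, -⟩ := id h
  rwa [Fs_sub_smul_one h, det_mul, det_mul, det_transpose, hdQ, one_mul, mul_one]

theorem almostInv_Fs_sub (hs : IsUnit (T - s • 1).det) (ha : AlmostInv (T - a • 1)) :
    AlmostInv (Fs s T - a • 1) := by
  obtain ⟨Q, R, h⟩ := exists_isQsRs (almostInv_of_isUnit_det hs)
  obtain ⟨-, -, hR, -, -⟩ := id h
  have hRdet := h.isUnit_det_right hs
  have : Invertible R := invertibleOfIsUnitDet R hRdet
  have hRinv : R⁻¹.IsUpperTriangular := blockTriangular_inv_of_blockTriangular hR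
  have hconj : Fs s T - a • 1 = R * (T - a • 1) * R⁻¹ := by
    rw [← h.transpose_mul_mul_sub_mul a, Fs_eq_of_isQsRs h, Matrix.mul_assoc _ R,
      mul_inv_of_invertible, Matrix.mul_one]
  rw [hconj]
  refine (ha.mul_left hRdet).mul_right hRinv fun i =>
    left_ne_zero_of_mul_eq_one (b := R i.castSucc i.castSucc) ?_
  rw [← hRinv.mul_apply_self hR, inv_mul_of_invertible, one_apply_eq]

theorem SymTridiag.isUpperHessenberg 
    (hT : SymTridiag T) : T.IsUpperHessenberg :=
  fun i j h => hT.2 i j (Or.inr h)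

theorem symTridiag_of_isUpperHessenberg 
    (hsymm : Tᵀ = T) (hT : T.IsUpperHessenberg) : SymTridiag T := by
  refine ⟨hsymm, fun i j h => h.elim (fun h => ?_) (hT i j)⟩
  rw [← hsymm, transpose_apply]
  exact hT j i h

theorem symTridiag_Fs (hT : SymTridiag T) (hs : IsUnit (T - s • 1).det) :
    SymTridiag (Fs s T) := by
  obtain ⟨Q, R, h⟩ := exists_isQsRs (almostInv_of_isUnit_det hs)
  obtain ⟨-, -, hR, -, hQR⟩ := id h
  have : Invertible R := invertibleOfIsUnitDet R (h.isUnit_det_right hs)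
  have hs1 : (s • 1 : Matrix (Fin (n+2)) (Fin (n+2)) ℝ).IsUpperHessenberg := by
    rw [smul_one_eq_diagonal]
    exact IsUpperTriangular.isUpperHessenberg (blockTriangular_diagonal _)
  have hQ : Q.IsUpperHessenberg := by
    have hQ_eq : Q = (T - s • 1) * R⁻¹ := by
      rw [hQR, Matrix.mul_assoc, mul_inv_of_invertible, Matrix.mul_one]
    rw [hQ_eq]
    exact (hT.isUpperHessenberg.sub hs1).mul_isUpperTriangular
      (blockTriangular_inv_of_blockTriangular hR)
  rw [Fs_eq_of_isQsRs h]
  refine symTridiag_of_isUpperHessenberg ?_ ?_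
  · rw [transpose_mul, transpose_mul, transpose_transpose, hT.1, Matrix.mul_assoc]
  · rw [h.transpose_mul_mul_eq]
    exact (IsUpperTriangular.mul_isUpperHessenberg hR hQ).add hs1

theorem Fs_Fs_eq (hb : AlmostInv (T - b • 1)) (ha : AlmostInv (Fs b T - a • 1)) :
    ∃ Q R, IsQsRs ((T - a • 1) * (T - b • 1)) Q R ∧ Fs a (Fs b T) = Qᵀ * T * Q := by
  obtain ⟨Q₁, R₁, h₁⟩ := exists_isQsRs hb
  obtain ⟨Q₂, R₂, h₂⟩ := exists_isQsRs ha
  obtain ⟨hQ₁, -, -, -, hQR₁⟩ := id h₁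
  refine ⟨Q₁ * Q₂, R₂ * R₁, ?_, ?_⟩
  · have hprod : Q₁ * (Fs b T - a • 1) * R₁ = (T - a • 1) * (T - b • 1) := by
      rw [Fs_sub_smul_one h₁, hQR₁]
      simp only [← Matrix.mul_assoc, mul_eq_one_comm.1 hQ₁, Matrix.one_mul]
    exact hprod ▸ h₁.mul h₂
  · rw [Fs_eq_of_isQsRs h₂, Fs_eq_of_isQsRs h₁]
    simp only [transpose_mul, Matrix.mul_assoc]

theorem Fs_comm (ha : AlmostInv (T - a • 1)) (hb : IsUnit (T - b • 1).det) :
    Fs a (Fs b T) = Fs b (Fs a T) := by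
  obtain ⟨Q, R, h, hab⟩ := Fs_Fs_eq (almostInv_of_isUnit_det hb) (almostInv_Fs_sub hb ha)
  obtain ⟨Q', R', h', hba⟩ := Fs_Fs_eq ha (almostInv_of_isUnit_det (isUnit_det_Fs_sub ha hb))
  rw [sub_smul_one_mul_comm] at h'
  rw [hab, hba, h.unique h']

variable {lam : Fin (n+2) → ℝ}

theorem isUnit_det_sub_of_mem_TSet (hT : T ∈ TSet lam) (hs : ∀ i, s ≠ lam i) :
    IsUnit (T - s • 1).det := by
  have hdet : (scalar _ s - T).det ≠ 0 := by
    rw [← eval_charpoly, hT.2, eval_charpoly, scalar_apply, diagonal_sub, det_diagonal]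
    exact Finset.prod_ne_zero_iff.2 fun i _ => sub_ne_zero.2 (hs i)
  rw [← neg_sub, det_neg, smul_one_eq_diagonal, ← scalar_apply]
  exact (isUnit_one.neg.pow _).mul hdet.isUnit

theorem Fs_mem_TSet (hT : T ∈ TSet lam) (hs : ∀ i, s ≠ lam i) : Fs s T ∈ TSet lam := by
  have hdet := isUnit_det_sub_of_mem_TSet hT hs
  exact ⟨symTridiag_Fs hT.1 hdet, (charpoly_Fs (almostInv_of_isUnit_det hdet)).trans hT.2⟩

end Step

theorem stmt8_general (n : ℕ) (lam : Fin (n+2) → ℝ) (s₀ s₁ : ℝ) :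
    ((∀ i : Fin (n+2), s₀ ≠ lam i) → (∀ i : Fin (n+2), s₁ ≠ lam i) →
      ∀ T ∈ TSet lam, Fs s₀ (Fs s₁ T) = Fs s₁ (Fs s₀ T)) ∧
    ((∀ i : Fin (n+2), s₁ ≠ lam i) → ∀ i : Fin (n+2), ∀ T ∈ DD lam i,
      Fs s₁ T ∈ DD lam i ∧ Fs (lam i) (Fs s₁ T) = Fs s₁ (Fs (lam i) T)) := by
  refine ⟨fun h₀ h₁ T hT => ?_, fun h₁ i T hT => ?_⟩
  · exact Fs_comm (almostInv_of_isUnit_det (isUnit_det_sub_of_mem_TSet hT h₀))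
      (isUnit_det_sub_of_mem_TSet hT h₁)
  · have hdet := isUnit_det_sub_of_mem_TSet hT.1 h₁
    exact ⟨⟨Fs_mem_TSet hT.1 h₁, almostInv_Fs_sub hdet hT.2⟩, Fs_comm hT.2 hdet⟩

theorem stmt8 (n : ℕ) (lam : Fin (n+2) → ℝ) (hlam : StrictMono lam) (s₀ s₁ : ℝ) :
    ((∀ i : Fin (n+2), s₀ ≠ lam i) → (∀ i : Fin (n+2), s₁ ≠ lam i) →
      ∀ T ∈ TSet lam, Fs s₀ (Fs s₁ T) = Fs s₁ (Fs s₀ T)) ∧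
    ((∀ i : Fin (n+2), s₁ ≠ lam i) → ∀ i : Fin (n+2), ∀ T ∈ DD lam i,
      Fs s₁ T ∈ DD lam i ∧ Fs (lam i) (Fs s₁ T) = Fs s₁ (Fs (lam i) T)) :=
  stmt8_general n lam s₀ s₁
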